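/- arXiv:2312.04905 — 4 statements merged into one kernel-verified Lean document; each statement's English description precedes it below -/
import Mathlib

section
/- The softmax operator with temperature τ > 0 is (1/τ)-Lipschitz with respect to the ℓ₁ norm: for all x, y ∈ ℝ^n, ‖σ_τ(x) - σ_τ(y)‖₁ ≤ (1/τ)‖x - y‖₁. -/
noncomputable def softmax {n : ℕ} (τ : ℝ) (x : Fin n → ℝ) : Fin n → ℝ :=
  fun a => Real.exp (x a / τ) / ∑ b, Real.exp (x b / τ)

/-!
Raising one coordinate `x i` by `δ ≥ 0` multiplies the unnormalised weight `exp (x i / τ)` by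
`L = exp (δ / τ)`: the `i`-th probability `p` becomes `L p / (1 + (L - 1) p)` and every other
probability shrinks, so the `ℓ₁` distance is twice the gain `(L - 1) p (1 - p) / (1 + (L - 1) p)`.
Writing `L = r²`, this gain is at most `(r - 1) / r ≤ log r = δ / (2τ)`. A general `x` is moved
to `y` one coordinate at a time, and the triangle inequality adds up the single-coordinate bounds.
-/

open Finset Real

lemma two_mul_exp_mul_div_sub_le {s t : ℝ} (hs : 0 ≤ s) (ht : 0 ≤ t) :
    2 * (exp s * t / (1 + (exp s - 1) * t) - t) ≤ s := by
  set r := exp (s / 2)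
  have hr : 1 ≤ r := one_le_exp (by linarith)
  have hr₀ : 0 < r := by linarith
  have hexp : exp s = r ^ 2 := by rw [sq, ← exp_add]; ring_nf
  have hD : 0 < 1 + (r ^ 2 - 1) * t := by
    have : 0 ≤ (r ^ 2 - 1) * t := mul_nonneg (by nlinarith) ht
    linarith
  have hlog : 2 * ((r - 1) / r) ≤ s := by
    have h := add_one_le_exp (-(s / 2))
    rw [exp_neg, ← one_div] at h
    have : (r - 1) / r = 1 - 1 / r := by field_simp
    linarith
  have hgain : r ^ 2 * t / (1 + (r ^ 2 - 1) * t) - t ≤ (r - 1) / r := by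
    rw [div_sub' hD.ne', div_le_div_iff₀ hD hr₀]
    nlinarith [mul_nonneg (sub_nonneg.2 hr) (sq_nonneg (1 - r * t)),
      mul_nonneg (sub_nonneg.2 hr) (mul_nonneg ht (sub_nonneg.2 hr)),
      mul_nonneg (sub_nonneg.2 hr) (mul_nonneg (sq_nonneg t) hr₀.le)]
  rw [hexp]
  linarith

lemma sum_abs_sub_eq_two_mul_of_le {ι : Type*} [Fintype ι] {p q : ι → ℝ} {i : ι}
    (hsum : ∑ a, p a = ∑ a, q a) (hle : ∀ a, a ≠ i → q a ≤ p a) :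
    ∑ a, |p a - q a| = 2 * (q i - p i) := by
  have hrest : ∑ a, (|p a - q a| - (p a - q a)) = |p i - q i| - (p i - q i) :=
    sum_eq_single i (fun a _ ha => by rw [abs_of_nonneg (sub_nonneg.2 (hle a ha)), sub_self])
      (by simp)
  have hpi : p i ≤ q i := by
    classical
    have hsplit := add_sum_erase univ (fun a => p a - q a) (mem_univ i)
    have hnonneg : 0 ≤ ∑ a ∈ univ.erase i, (p a - q a) :=
      sum_nonneg fun a ha => sub_nonneg.2 (hle a (ne_of_mem_erase ha))
    have htotal : ∑ a, (p a - q a) = 0 := by rw [sum_sub_distrib, hsum, sub_self]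
    linarith
  rw [sum_sub_distrib, sum_sub_distrib, hsum, sub_self, sub_zero,
    abs_of_nonpos (sub_nonpos.2 hpi)] at hrest
  linarith

lemma sum_abs_sub_le_of_forall_update {ι κ : Type*} [Fintype ι] [DecidableEq ι] [Fintype κ]
    (g : (ι → ℝ) → κ → ℝ) (K : ℝ)
    (hg : ∀ x i v, ∑ b, |g x b - g (Function.update x i v) b| ≤ K * |x i - v|)
    (x y : ι → ℝ) :
    ∑ b, |g x b - g y b| ≤ K * ∑ a, |x a - y a| := by
  suffices h : ∀ s : Finset ι, ∀ x : ι → ℝ, (∀ a ∉ s, x a = y a) →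
      ∑ b, |g x b - g y b| ≤ K * ∑ a ∈ s, |x a - y a| from
    h univ x fun a ha => absurd (mem_univ a) ha
  intro s
  induction s using Finset.induction_on with
  | empty =>
    intro x hxy
    simp [funext fun a => hxy a (notMem_empty a)]
  | insert i s hi ih =>
    intro x hxy
    set x' := Function.update x i (y i) with hx'
    have hfirst := hg x i (y i)
    have hagree : ∀ a ∉ s, x' a = y a := fun a ha => by
      by_cases hai : a = i
      · rw [hai, hx', Function.update_self]
      · rw [hx', Function.update_of_ne hai]; exact hxy a (by simp [hai, ha])
    have hsame : ∑ a ∈ s, |x' a - y a| = ∑ a ∈ s, |x a - y a| := sum_congr rfl fun a ha => by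
      rw [hx', Function.update_of_ne (ne_of_mem_of_not_mem ha hi)]
    have hrest := hsame ▸ ih x' hagree
    have htri : ∑ b, |g x b - g y b| ≤ ∑ b, |g x b - g x' b| + ∑ b, |g x' b - g y b| := by
      rw [← sum_add_distrib]
      exact sum_le_sum fun b _ => abs_sub_le _ _ _
    rw [sum_insert hi, mul_add]
    linarith

section Softmax

variable {n : ℕ} {τ : ℝ}

lemma softmax_nonneg (x : Fin n → ℝ) (a : Fin n) : 0 ≤ softmax τ x a :=
  div_nonneg (exp_pos _).le (sum_nonneg fun _ _ => (exp_pos _).le)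

lemma sum_softmax [NeZero n] (x : Fin n → ℝ) : ∑ a, softmax τ x a = 1 := by
  simp only [softmax]
  rw [← sum_div, div_self (sum_pos (fun _ _ => exp_pos _) univ_nonempty).ne']

lemma sum_exp_update_div (x : Fin n → ℝ) (i : Fin n) (v : ℝ) :
    ∑ b, exp (Function.update x i v b / τ)
      = (1 + (exp ((v - x i) / τ) - 1) * softmax τ x i) * ∑ b, exp (x b / τ) := by
  have hZ : 0 < ∑ b, exp (x b / τ) := sum_pos (fun _ _ => exp_pos _) ⟨i, mem_univ i⟩
  have hvi : exp (v / τ) = exp ((v - x i) / τ) * exp (x i / τ) := by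
    rw [← exp_add, sub_div, sub_add_cancel]
  have hsplit := sum_eq_add_sum_sdiff_singleton_of_mem (mem_univ i) (fun b => exp (x b / τ))
  simp only [Function.apply_update (fun _ y => exp (y / τ)), sum_update_of_mem (mem_univ i),
    softmax, hvi]
  field_simp
  linear_combination -hsplit

lemma softmax_update_self (x : Fin n → ℝ) (i : Fin n) (v : ℝ) :
    softmax τ (Function.update x i v) i
      = exp ((v - x i) / τ) * softmax τ x i / (1 + (exp ((v - x i) / τ) - 1) * softmax τ x i) := by
  have hvi : exp (v / τ) = exp ((v - x i) / τ) * exp (x i / τ) := by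
    rw [← exp_add, sub_div, sub_add_cancel]
  rw [show softmax τ (Function.update x i v) i = exp (Function.update x i v i / τ) /
    ∑ b, exp (Function.update x i v b / τ) from rfl, sum_exp_update_div, Function.update_self,
    hvi, mul_comm (1 + _), ← div_div, mul_div_assoc]
  rfl

lemma softmax_update_of_ne (x : Fin n → ℝ) {i a : Fin n} (h : a ≠ i) (v : ℝ) :
    softmax τ (Function.update x i v) a
      = softmax τ x a / (1 + (exp ((v - x i) / τ) - 1) * softmax τ x i) := by
  rw [show softmax τ (Function.update x i v) a = exp (Function.update x i v a / τ) /
    ∑ b, exp (Function.update x i v b / τ) from rfl, sum_exp_update_div,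
    Function.update_of_ne h, mul_comm (1 + _), ← div_div]
  rfl

lemma sum_abs_softmax_sub_update_le_of_le (hτ : 0 < τ) (x : Fin n → ℝ) (i : Fin n) {v : ℝ}
    (hv : x i ≤ v) :
    ∑ a, |softmax τ x a - softmax τ (Function.update x i v) a| ≤ (1 / τ) * (v - x i) := by
  have : NeZero n := NeZero.of_pos i.pos
  have hs : 0 ≤ (v - x i) / τ := div_nonneg (sub_nonneg.2 hv) hτ.le
  have hD : 1 ≤ 1 + (exp ((v - x i) / τ) - 1) * softmax τ x i := by
    have := mul_nonneg (sub_nonneg.2 (one_le_exp hs)) (softmax_nonneg (τ := τ) x i)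
    linarith
  rw [sum_abs_sub_eq_two_mul_of_le (i := i) (by rw [sum_softmax, sum_softmax])
      fun a ha => by
        rw [softmax_update_of_ne x ha]
        exact div_le_self (softmax_nonneg x a) hD,
    softmax_update_self, one_div_mul_eq_div]
  exact two_mul_exp_mul_div_sub_le hs (softmax_nonneg x i)

lemma sum_abs_softmax_sub_update_le (hτ : 0 < τ) (x : Fin n → ℝ) (i : Fin n) (v : ℝ) :
    ∑ a, |softmax τ x a - softmax τ (Function.update x i v) a| ≤ (1 / τ) * |x i - v| := by
  rcases le_total (x i) v with hv | hv
  · rw [abs_sub_comm, abs_of_nonneg (sub_nonneg.2 hv)]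
    exact sum_abs_softmax_sub_update_le_of_le hτ x i hv
  · have hback : Function.update (Function.update x i v) i (x i) = x := by simp
    have h := sum_abs_softmax_sub_update_le_of_le hτ (Function.update x i v) i (v := x i)
      (by rwa [Function.update_self])
    rw [hback, Function.update_self] at h
    simpa only [abs_sub_comm, abs_of_nonneg (sub_nonneg.2 hv)] using h

end Softmax

/-- The softmax operator with temperature `τ > 0` is `(1/τ)`-Lipschitz with respect
to the `ℓ₁` norm. -/
theorem softmax_l1_lipschitz {n : ℕ} (τ : ℝ) (hτ : 0 < τ) (x y : Fin n → ℝ) :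
    ∑ a, |softmax τ x a - softmax τ y a| ≤ (1 / τ) * ∑ a, |x a - y a| :=
  sum_abs_sub_le_of_forall_update (softmax τ) (1 / τ) (sum_abs_softmax_sub_update_le hτ) x y
end

section
/- Fix τ, μ > 0, a matrix B ∈ ℝ^{n×m}, and y ∈ ℝ^m. For x ∈ ℝ^n define p(μ,x,y) = argmin_{u ∈ Δ^m} { -uᵀy - τν(u) + (1/(2μ))‖x - Bu‖₂² }. Then for all x₁, x₂ ∈ ℝ^n: (i) ‖B(p(μ,x₂,y) - p(μ,x₁,y))‖₂ ≤ ‖x₂ - x₁‖₂, and (ii) ‖p(μ,x₂,y) - p(μ,x₁,y)‖₂ ≤ (1/(2√(μτ)))‖x₂ - x₁‖₂. -/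
noncomputable def e2 {n : ℕ} (v : Fin n → ℝ) : ℝ := Real.sqrt (∑ i, (v i) ^ 2)

noncomputable def entropy {n : ℕ} (u : Fin n → ℝ) : ℝ :=
  -∑ a, u a * Real.log (u a)

/-!
Write the objective as `F u = g u + ‖x - B u‖² / (2μ)` with `g u = τ ∑ u log u - ⟪u, y⟫`. Since
`s ↦ s log s - s² / 2` is convex on `[0, 1]`, `g` is `τ`-strongly convex on the simplex for the
Euclidean norm. Comparing the minimizer `p` with the points of the segment from `p` to `q` and
letting them tend to `p` gives the quadratic growth
`F q - F p ≥ τ/2 ‖q - p‖² + ‖B (q - p)‖² / (2μ)`; no first-order condition is needed, which matters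
because the derivative of the entropy blows up on the boundary of the simplex. Adding this growth
bound for `(x₁, p₁, p₂)` and `(x₂, p₂, p₁)`, the values of `g` cancel and the quadratic terms
telescope to `μτ ‖p₂ - p₁‖² + ‖B (p₂ - p₁)‖² ≤ ⟪x₂ - x₁, B (p₂ - p₁)⟫`. Cauchy–Schwarz then
gives (i), and `μτ ‖p₂ - p₁‖² ≤ αβ - β² ≤ α² / 4` with `α = ‖x₂ - x₁‖`, `β = ‖B (p₂ - p₁)‖`
gives (ii).
-/

open Real Set Filter Topology

theorem IsMinOn.le_sub_of_forall_combo_le {E : Type*} [AddCommGroup E] [Module ℝ E]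
    {s : Set E} {f : E → ℝ} {p q : E} {K : ℝ} (hs : Convex ℝ s) (hp : p ∈ s) (hq : q ∈ s)
    (hmin : IsMinOn f s p)
    (hcombo : ∀ ⦃a b : ℝ⦄, 0 < a → 0 < b → a + b = 1 →
      f (a • p + b • q) ≤ a * f p + b * f q - a * b * K) :
    K ≤ f q - f p := by
  have hnear : ∀ᶠ b in 𝓝[>] (0 : ℝ), (1 - b) * K ≤ f q - f p := by
    filter_upwards [Ioo_mem_nhdsGT one_pos] with b hb
    have hmem : (1 - b) • p + b • q ∈ s := hs hp hq (by linarith [hb.2]) hb.1.le (by ring)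
    have h := hcombo (a := 1 - b) (by linarith [hb.2]) hb.1 (by ring)
    have hfp : f p ≤ f ((1 - b) • p + b • q) := hmin hmem
    have hb' : b * ((1 - b) * K) ≤ b * (f q - f p) := by linarith
    exact le_of_mul_le_mul_left hb' hb.1
  have hlim : Tendsto (fun b : ℝ => (1 - b) * K) (𝓝[>] 0) (𝓝 K) := by
    have : Tendsto (fun b : ℝ => (1 - b) * K) (𝓝 0) (𝓝 ((1 - 0) * K)) :=
      ((continuous_const.sub continuous_id).mul continuous_const).tendsto 0
    simpa using this.mono_left nhdsWithin_le_nhds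
  exact le_of_tendsto hlim hnear

theorem strongConvexOn_norm_sq {F : Type*} [NormedAddCommGroup F] [InnerProductSpace ℝ F] :
    StrongConvexOn univ 2 (fun x : F => ‖x‖ ^ 2) :=
  strongConvexOn_iff_convex.2 (by simpa using convexOn_const (0 : ℝ) convex_univ)

section Sensitivity

variable {E F : Type*} [NormedAddCommGroup E] [NormedSpace ℝ E]
  [NormedAddCommGroup F] [InnerProductSpace ℝ F]
  {s : Set E} {g : E → ℝ} {τ : ℝ} (A : E →ₗ[ℝ] F)

theorem StrongConvexOn.le_sub_of_isMinOn_add_norm_sq (hg : StrongConvexOn s τ g) {c : ℝ}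
    (hc : 0 ≤ c) (x : F) {p q : E} (hp : p ∈ s) (hq : q ∈ s)
    (hmin : IsMinOn (fun u => g u + c * ‖x - A u‖ ^ 2) s p) :
    τ / 2 * ‖q - p‖ ^ 2 + c * ‖A (q - p)‖ ^ 2
      ≤ (g q + c * ‖x - A q‖ ^ 2) - (g p + c * ‖x - A p‖ ^ 2) := by
  refine hmin.le_sub_of_forall_combo_le hg.1 hp hq fun a b ha hb hab => ?_
  have hgab := hg.2 hp hq ha.le hb.le hab
  have hsq := strongConvexOn_norm_sq.2 (mem_univ (x - A p)) (mem_univ (x - A q)) ha.le hb.le hab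
  have hx : a • (x - A p) + b • (x - A q) = x - A (a • p + b • q) := by
    calc a • (x - A p) + b • (x - A q) = (a + b) • x - (a • A p + b • A q) := by module
      _ = x - A (a • p + b • q) := by rw [hab, one_smul, map_add, map_smul, map_smul]
  have hdiff : x - A p - (x - A q) = A (q - p) := by rw [map_sub]; abel
  rw [hx, hdiff] at hsq
  rw [norm_sub_rev] at hgab
  simp only [smul_eq_mul] at hgab hsq ⊢
  linear_combination hgab + c * hsq

theorem StrongConvexOn.add_sq_le_inner_of_isMinOn (hg : StrongConvexOn s τ g) {μ : ℝ}
    (hμ : 0 < μ) {x₁ x₂ : F} {p₁ p₂ : E} (hp₁ : p₁ ∈ s) (hp₂ : p₂ ∈ s)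
    (hmin₁ : IsMinOn (fun u => g u + 1 / (2 * μ) * ‖x₁ - A u‖ ^ 2) s p₁)
    (hmin₂ : IsMinOn (fun u => g u + 1 / (2 * μ) * ‖x₂ - A u‖ ^ 2) s p₂) :
    μ * τ * ‖p₂ - p₁‖ ^ 2 + ‖A (p₂ - p₁)‖ ^ 2 ≤ inner ℝ (x₂ - x₁) (A (p₂ - p₁)) := by
  set c := 1 / (2 * μ)
  have hc : 0 ≤ c := by positivity
  have gap₁ := hg.le_sub_of_isMinOn_add_norm_sq A hc x₁ hp₁ hp₂ hmin₁
  have gap₂ := hg.le_sub_of_isMinOn_add_norm_sq A hc x₂ hp₂ hp₁ hmin₂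
  rw [norm_sub_rev p₁, ← norm_neg (A (p₁ - p₂)), ← map_neg, neg_sub] at gap₂
  have hcross : ‖x₁ - A p₂‖ ^ 2 - ‖x₁ - A p₁‖ ^ 2 + (‖x₂ - A p₁‖ ^ 2 - ‖x₂ - A p₂‖ ^ 2)
      = 2 * inner ℝ (x₂ - x₁) (A (p₂ - p₁)) := by
    simp only [norm_sub_sq_real, map_sub, inner_sub_left, inner_sub_right]
    ring
  have hsum : τ * ‖p₂ - p₁‖ ^ 2 + 2 * c * ‖A (p₂ - p₁)‖ ^ 2
      ≤ 2 * c * inner ℝ (x₂ - x₁) (A (p₂ - p₁)) := by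
    linear_combination gap₁ + gap₂ + c * hcross
  have hμc : μ * (2 * c) = 1 := by simp only [c]; field_simp
  linear_combination μ * hsum - (‖A (p₂ - p₁)‖ ^ 2 - inner ℝ (x₂ - x₁) (A (p₂ - p₁))) * hμc

theorem le_and_le_of_mul_sq_add_sq_le_mul {k σ α β : ℝ} (hk : 0 < k) (hα : 0 ≤ α)
    (h : k * σ ^ 2 + β ^ 2 ≤ α * β) : β ≤ α ∧ σ ≤ 1 / (2 * √k) * α := by
  have hkσ : 0 ≤ k * σ ^ 2 := by positivity
  refine ⟨by nlinarith, ?_⟩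
  have hsq : (2 * √k * σ) ^ 2 ≤ α ^ 2 := by
    rw [mul_pow, mul_pow, sq_sqrt hk.le]
    nlinarith [sq_nonneg (α - 2 * β)]
  have hσ : 2 * √k * σ ≤ α := (le_abs_self _).trans (abs_le_of_sq_le_sq hsq hα)
  rw [one_div_mul_eq_div, le_div_iff₀ (by positivity)]
  linarith

theorem StrongConvexOn.norm_map_sub_le_and_norm_sub_le (hg : StrongConvexOn s τ g)
    (hτ : 0 < τ) {μ : ℝ} (hμ : 0 < μ) {x₁ x₂ : F} {p₁ p₂ : E} (hp₁ : p₁ ∈ s) (hp₂ : p₂ ∈ s)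
    (hmin₁ : IsMinOn (fun u => g u + 1 / (2 * μ) * ‖x₁ - A u‖ ^ 2) s p₁)
    (hmin₂ : IsMinOn (fun u => g u + 1 / (2 * μ) * ‖x₂ - A u‖ ^ 2) s p₂) :
    ‖A (p₂ - p₁)‖ ≤ ‖x₂ - x₁‖ ∧ ‖p₂ - p₁‖ ≤ 1 / (2 * √(μ * τ)) * ‖x₂ - x₁‖ :=
  le_and_le_of_mul_sq_add_sq_le_mul (by positivity) (norm_nonneg _)
    ((hg.add_sq_le_inner_of_isMinOn A hμ hp₁ hp₂ hmin₁ hmin₂).trans (real_inner_le_norm _ _))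

end Sensitivity

theorem convexOn_mul_log_sub_sq_div_two :
    ConvexOn ℝ (Icc 0 1) (fun x : ℝ => x * log x - x ^ 2 / 2) := by
  refine convexOn_of_hasDerivWithinAt2_nonneg (f' := fun x => log x + 1 - x)
    (f'' := fun x => x⁻¹ - 1) (convex_Icc 0 1)
    ((continuous_mul_log.sub (by fun_prop)).continuousOn) ?_ ?_ ?_ <;>
    rw [interior_Icc] <;> intro x hx
  · have h : HasDerivAt (fun x => x * log x - x ^ 2 / 2) (log x + 1 - x) x :=
      ((hasDerivAt_mul_log hx.1.ne').sub ((hasDerivAt_pow 2 x).div_const 2)).congr_deriv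
        (by norm_num)
    exact h.hasDerivWithinAt
  · exact (((hasDerivAt_log hx.1.ne').add_const 1).sub (hasDerivAt_id x)).hasDerivWithinAt
  · simpa using one_le_inv₀ hx.1 |>.2 hx.2.le

theorem strongConvexOn_mul_log : StrongConvexOn (Icc 0 1) 1 (fun x : ℝ => x * log x) :=
  strongConvexOn_iff_convex.2 (by simpa [Real.norm_eq_abs, sq_abs, div_eq_inv_mul] using
    convexOn_mul_log_sub_sq_div_two)

theorem StrongConvexOn.const_mul_sub_mul {t : Set ℝ} {f : ℝ → ℝ} (hf : StrongConvexOn t 1 f)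
    {τ : ℝ} (hτ : 0 ≤ τ) (c : ℝ) : StrongConvexOn t τ (fun x => τ * f x - x * c) := by
  refine ⟨hf.1, fun x hx y hy a b ha hb hab => ?_⟩
  have h := hf.2 hx hy ha hb hab
  simp only [smul_eq_mul] at h ⊢
  linear_combination τ * h

theorem StrongConvexOn.sum_apply {ι : Type*} [Fintype ι] {t : Set ℝ} {m : ℝ}
    {φ : ι → ℝ → ℝ} (hφ : ∀ i, StrongConvexOn t m (φ i)) {s : Set (EuclideanSpace ℝ ι)}
    (hs : Convex ℝ s) (hst : ∀ u ∈ s, ∀ i, u i ∈ t) :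
    StrongConvexOn s m (fun u => ∑ i, φ i (u i)) := by
  refine ⟨hs, fun u hu v hv a b ha hb hab => ?_⟩
  have h i := (hφ i).2 (hst u hu i) (hst v hv i) ha hb hab
  simp only [smul_eq_mul, Real.norm_eq_abs, sq_abs] at h ⊢
  calc ∑ i, φ i ((a • u + b • v) i)
      ≤ ∑ i, (a * φ i (u i) + b * φ i (v i) - a * b * (m / 2 * (u i - v i) ^ 2)) :=
        Finset.sum_le_sum fun i _ => by simpa using h i
    _ = a * ∑ i, φ i (u i) + b * ∑ i, φ i (v i) - a * b * (m / 2 * ‖u - v‖ ^ 2) := by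
        simp [EuclideanSpace.norm_sq_eq, Finset.sum_add_distrib, Finset.sum_sub_distrib,
          Finset.mul_sum]

theorem strongConvexOn_sum_mul_log_sub_mul {ι : Type*} [Fintype ι] {τ : ℝ} (hτ : 0 ≤ τ)
    (y : ι → ℝ) :
    StrongConvexOn (WithLp.ofLp ⁻¹' stdSimplex ℝ ι) τ
      (fun u : EuclideanSpace ℝ ι => ∑ a, (τ * (u a * log (u a)) - u a * y a)) :=
  StrongConvexOn.sum_apply (fun a => strongConvexOn_mul_log.const_mul_sub_mul hτ (y a))
    ((convex_stdSimplex ℝ ι).linear_preimage (WithLp.linearEquiv 2 ℝ _).toLinearMap)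
    fun _ hu a => mem_Icc_of_mem_stdSimplex hu a

theorem e2_eq_norm {n : ℕ} (v : Fin n → ℝ) : e2 v = ‖WithLp.toLp 2 v‖ := by
  simp [e2, EuclideanSpace.norm_eq]

/-- Sensitivity of `p(μ,x,y) = argmin_{u ∈ Δ^m} { -uᵀy - τν(u) + (1/(2μ))‖x - Bu‖₂² }`
in the variable `x`:
(i) `‖B(p(μ,x₂,y) - p(μ,x₁,y))‖₂ ≤ ‖x₂ - x₁‖₂`, and
(ii) `‖p(μ,x₂,y) - p(μ,x₁,y)‖₂ ≤ (1/(2√(μτ)))‖x₂ - x₁‖₂`. -/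
theorem argmin_sensitivity_in_x {n m : ℕ} (τ μ : ℝ) (hτ : 0 < τ) (hμ : 0 < μ)
    (B : Matrix (Fin n) (Fin m) ℝ) (y : Fin m → ℝ) (x₁ x₂ : Fin n → ℝ)
    (p₁ p₂ : Fin m → ℝ)
    (hp₁ : p₁ ∈ stdSimplex ℝ (Fin m)) (hp₂ : p₂ ∈ stdSimplex ℝ (Fin m))
    (hmin₁ : IsMinOn (fun u : Fin m → ℝ =>
        -(∑ a, u a * y a) - τ * entropy u
          + (1 / (2 * μ)) * (e2 (fun i => x₁ i - B.mulVec u i)) ^ 2)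
      (stdSimplex ℝ (Fin m)) p₁)
    (hmin₂ : IsMinOn (fun u : Fin m → ℝ =>
        -(∑ a, u a * y a) - τ * entropy u
          + (1 / (2 * μ)) * (e2 (fun i => x₂ i - B.mulVec u i)) ^ 2)
      (stdSimplex ℝ (Fin m)) p₂) :
    e2 (fun i => B.mulVec p₂ i - B.mulVec p₁ i) ≤ e2 (fun i => x₂ i - x₁ i) ∧
    e2 (fun a => p₂ a - p₁ a)
      ≤ (1 / (2 * Real.sqrt (μ * τ))) * e2 (fun i => x₂ i - x₁ i) := by
  set A := Matrix.toLpLin 2 2 B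
  set g : EuclideanSpace ℝ (Fin m) → ℝ := fun u => ∑ a, (τ * (u a * log (u a)) - u a * y a)
  have hobj (x : Fin n → ℝ) : (fun u => g u + 1 / (2 * μ) * ‖WithLp.toLp 2 x - A u‖ ^ 2) =
      (fun u : Fin m → ℝ => -(∑ a, u a * y a) - τ * entropy u
          + (1 / (2 * μ)) * (e2 (fun i => x i - B.mulVec u i)) ^ 2) ∘ WithLp.ofLp := by
    funext u
    have hnorm : ‖WithLp.toLp 2 x - A u‖ = e2 (fun i => x i - B.mulVec u.ofLp i) := by
      rw [e2_eq_norm, Matrix.toLpLin_apply, ← WithLp.toLp_sub]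
      rfl
    simp only [Function.comp_apply, g, entropy, hnorm, Finset.sum_sub_distrib, mul_neg,
      Finset.mul_sum]
    ring
  have key := (strongConvexOn_sum_mul_log_sub_mul hτ.le y).norm_map_sub_le_and_norm_sub_le A hτ hμ
    hp₁ hp₂ (hobj x₁ ▸ hmin₁.on_preimage WithLp.ofLp) (hobj x₂ ▸ hmin₂.on_preimage WithLp.ofLp)
  rw [← WithLp.toLp_sub, ← WithLp.toLp_sub, Matrix.toLpLin_toLp, Matrix.toLin'_apply,
    Matrix.mulVec_sub] at key
  rw [e2_eq_norm, e2_eq_norm, e2_eq_norm]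
  exact key
end

section
/- Let V₁(x,y) = max_{u' ∈ Δ^m} min_{u ∈ Δ^m} { (u'-u)ᵀy + τν(u') - τν(u) + (1/(2μ))‖x - Bu‖₂² } with τ, μ > 0 and B ∈ ℝ^{n×m}. Then for all x ∈ ℝ^n, y ∈ ℝ^m: ‖σ_τ(y) - p(μ,x,y)‖₂ ≤ √(2/τ)·V₁(x,y)^{1/2}, where p(μ,x,y) is the minimizer in the definition of V₁. -/
/-- `V₁(x,y) = max_{u'∈Δ^m}{u'ᵀy + τν(u')} + min_{u∈Δ^m}{-uᵀy - τν(u) + (1/(2μ))‖x-Bu‖₂²}`. -/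
noncomputable def V1 {n m : ℕ} (τ μ : ℝ) (B : Matrix (Fin n) (Fin m) ℝ)
    (x : Fin n → ℝ) (y : Fin m → ℝ) : ℝ :=
  sSup ((fun u' : Fin m → ℝ => ∑ a, u' a * y a + τ * entropy u') '' stdSimplex ℝ (Fin m)) +
  sInf ((fun u : Fin m → ℝ =>
      -(∑ a, u a * y a) - τ * entropy u
        + (1 / (2 * μ)) * (e2 (fun i => x i - B.mulVec u i)) ^ 2) '' stdSimplex ℝ (Fin m))

/-!
Put `f(u) = uᵀy + τ ν(u)`. By Gibbs' variational principle `f(σ_τ(y)) - f(u) = τ KL(u ‖ σ_τ(y))`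
on the simplex, so the softmax maximizes `f`, and the KL divergence dominates
`½ ‖u - σ_τ(y)‖₂²` coordinatewise since `t ↦ t log t - t²/2` is convex on `[0, 1]`. At the
minimizer `p`, `V₁ = f(σ_τ(y)) - f(p) + ‖x - Bp‖₂²/(2μ) ≥ (τ/2) ‖σ_τ(y) - p‖₂²`.
-/

open Real

lemma log_sub_self_strictMonoOn : StrictMonoOn (fun t => log t - t) (Set.Ioc (0 : ℝ) 1) := by
  refine strictMonoOn_of_deriv_pos (convex_Ioc 0 1)
    ((continuousOn_log.mono fun t ht => ht.1.ne').sub continuousOn_id) fun t ht => ?_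
  rw [interior_Ioc] at ht
  rw [((hasDerivAt_log ht.1.ne').fun_sub (hasDerivAt_id' t)).deriv]
  linarith [(one_lt_inv₀ ht.1).mpr ht.2]

/-- The tangent-line inequality at `s` for the convex function `t ↦ t log t - t²/2`. -/
lemma sq_sub_div_two_le_mul_log_sub {s t : ℝ} (hs₀ : 0 < s) (hs₁ : s ≤ 1) (ht₀ : 0 ≤ t)
    (ht₁ : t ≤ 1) : (s - t) ^ 2 / 2 ≤ t * log t - t * log s - t + s := by
  set f : ℝ → ℝ := fun v => v * log v - v * log s - v + s - (v - s) ^ 2 / 2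
  have hf : ∀ v, v ≠ 0 → HasDerivAt f ((log v - v) - (log s - s)) v := fun v hv => by
    have := ((((hasDerivAt_mul_log hv).sub ((hasDerivAt_id v).mul_const (log s))).sub
      (hasDerivAt_id v)).add_const s).sub ((((hasDerivAt_id v).sub_const s).pow 2).div_const 2)
    exact this.congr_deriv (by simp only [id, Nat.cast_ofNat, Nat.add_one_sub_one, pow_one]; ring)
  have hcont : ContinuousOn f (Set.Icc 0 1) := by
    have := continuous_mul_log
    fun_prop
  have hdiff : ∀ v ∈ Set.Ioo (0 : ℝ) 1, DifferentiableAt ℝ f v := fun v hv =>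
    (hf v hv.1.ne').differentiableAt
  suffices 0 ≤ f t by simp only [f, sub_sq_comm t s] at this; linarith
  have hfs : f s = 0 := by simp [f]
  rcases le_total t s with hts | hst
  · refine hfs ▸ antitoneOn_of_deriv_nonpos (convex_Icc 0 s)
      (hcont.mono (Set.Icc_subset_Icc_right hs₁)) (fun v hv => ?_) (fun v hv => ?_)
      ⟨ht₀, hts⟩ ⟨hs₀.le, le_rfl⟩ hts
    · rw [interior_Icc] at hv
      exact (hdiff v ⟨hv.1, hv.2.trans_le hs₁⟩).differentiableWithinAt
    · rw [interior_Icc] at hv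
      rw [(hf v hv.1.ne').deriv, sub_nonpos]
      exact (log_sub_self_strictMonoOn ⟨hv.1, hv.2.le.trans hs₁⟩ ⟨hs₀, hs₁⟩ hv.2).le
  · refine hfs ▸ monotoneOn_of_deriv_nonneg (convex_Icc s 1)
      (hcont.mono (Set.Icc_subset_Icc_left hs₀.le)) (fun v hv => ?_) (fun v hv => ?_)
      ⟨le_rfl, hs₁⟩ ⟨hst, ht₁⟩ hst
    · rw [interior_Icc] at hv
      exact (hdiff v ⟨hs₀.trans hv.1, hv.2⟩).differentiableWithinAt
    · rw [interior_Icc] at hv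
      rw [(hf v (hs₀.trans hv.1).ne').deriv, sub_nonneg]
      exact (log_sub_self_strictMonoOn ⟨hs₀, hs₁⟩ ⟨hs₀.trans hv.1, hv.2.le⟩ hv.1).le

lemma nonempty_of_mem_stdSimplex {ι : Type*} [Fintype ι] {u : ι → ℝ}
    (hu : u ∈ stdSimplex ℝ ι) : Nonempty ι :=
  not_isEmpty_iff.mp fun _ => by simp [stdSimplex_of_isEmpty_index] at hu

noncomputable def entropicObjective {m : ℕ} (τ : ℝ) (y u : Fin m → ℝ) : ℝ :=
  ∑ a, u a * y a + τ * entropy u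

section Softmax

variable {m : ℕ} (τ : ℝ) (y : Fin m → ℝ)

lemma softmax_pos (a : Fin m) : 0 < softmax τ y a :=
  div_pos (exp_pos _) (Finset.sum_pos (fun _ _ => exp_pos _) ⟨a, Finset.mem_univ a⟩)

lemma softmax_mem_stdSimplex [Nonempty (Fin m)] : softmax τ y ∈ stdSimplex ℝ (Fin m) := by
  refine ⟨fun a => (softmax_pos τ y a).le, ?_⟩
  simp only [softmax, ← Finset.sum_div]
  rw [div_self]
  exact (Finset.sum_pos (fun _ _ => exp_pos _) Finset.univ_nonempty).ne'

lemma log_softmax (a : Fin m) :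
    log (softmax τ y a) = y a / τ - log (∑ b, exp (y b / τ)) := by
  rw [softmax, log_div (exp_ne_zero _), log_exp]
  exact (Finset.sum_pos (fun _ _ => exp_pos _) ⟨a, Finset.mem_univ a⟩).ne'

lemma sum_mul_log_softmax {v : Fin m → ℝ} (hv : ∑ a, v a = 1) :
    ∑ a, v a * log (softmax τ y a) = (∑ a, v a * y a) / τ - log (∑ b, exp (y b / τ)) := by
  simp only [log_softmax, mul_sub, Finset.sum_sub_distrib, ← Finset.sum_mul, hv, one_mul,
    Finset.sum_div, mul_div_assoc]

lemma entropicObjective_softmax_sub {τ : ℝ} (hτ : τ ≠ 0) {u : Fin m → ℝ}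
    (hu : u ∈ stdSimplex ℝ (Fin m)) :
    entropicObjective τ y (softmax τ y) - entropicObjective τ y u =
      τ * ∑ a, (u a * log (u a) - u a * log (softmax τ y a)) := by
  have := nonempty_of_mem_stdSimplex hu
  rw [entropicObjective, entropicObjective, entropy, entropy, Finset.sum_sub_distrib,
    sum_mul_log_softmax τ y hu.2, sum_mul_log_softmax τ y (softmax_mem_stdSimplex τ y).2]
  field_simp
  ring

lemma sq_dist_softmax_le {τ : ℝ} (hτ : 0 < τ) {u : Fin m → ℝ}
    (hu : u ∈ stdSimplex ℝ (Fin m)) :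
    τ / 2 * ∑ a, (softmax τ y a - u a) ^ 2 ≤
      entropicObjective τ y (softmax τ y) - entropicObjective τ y u := by
  have := nonempty_of_mem_stdSimplex hu
  have hσ := softmax_mem_stdSimplex τ y
  have hsum : ∑ a, (u a * log (u a) - u a * log (softmax τ y a)) =
      ∑ a, (u a * log (u a) - u a * log (softmax τ y a) - u a + softmax τ y a) := by
    simp only [Finset.sum_add_distrib, Finset.sum_sub_distrib, hu.2, hσ.2]
    ring
  calc τ / 2 * ∑ a, (softmax τ y a - u a) ^ 2 = τ * ∑ a, (softmax τ y a - u a) ^ 2 / 2 := by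
        rw [← Finset.sum_div]; ring
    _ ≤ τ * ∑ a, (u a * log (u a) - u a * log (softmax τ y a) - u a + softmax τ y a) := by
        gcongr with a
        exact sq_sub_div_two_le_mul_log_sub (softmax_pos τ y a)
          (mem_Icc_of_mem_stdSimplex hσ a).2 (hu.1 a) (mem_Icc_of_mem_stdSimplex hu a).2
    _ = _ := by rw [← hsum, entropicObjective_softmax_sub y hτ.ne' hu]

lemma isGreatest_entropicObjective_softmax {τ : ℝ} (hτ : 0 < τ) [Nonempty (Fin m)] :
    IsGreatest (entropicObjective τ y '' stdSimplex ℝ (Fin m))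
      (entropicObjective τ y (softmax τ y)) := by
  refine ⟨Set.mem_image_of_mem _ (softmax_mem_stdSimplex τ y), ?_⟩
  rintro _ ⟨u, hu, rfl⟩
  have := sq_dist_softmax_le y hτ hu
  have : 0 ≤ τ / 2 * ∑ a, (softmax τ y a - u a) ^ 2 := by positivity
  linarith

end Softmax

/-- `‖σ_τ(y) - p(μ,x,y)‖₂ ≤ √(2/τ)·V₁(x,y)^{1/2}`, where `p(μ,x,y)` is the minimizer in the
definition of `V₁`. -/
theorem softmax_sub_p_le_sqrt_V1 {n m : ℕ} (τ μ : ℝ) (hτ : 0 < τ) (hμ : 0 < μ)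
    (B : Matrix (Fin n) (Fin m) ℝ) (x : Fin n → ℝ) (y : Fin m → ℝ) (p : Fin m → ℝ)
    (hp : p ∈ stdSimplex ℝ (Fin m))
    (hmin : IsMinOn (fun u : Fin m → ℝ =>
        -(∑ a, u a * y a) - τ * entropy u
          + (1 / (2 * μ)) * (e2 (fun i => x i - B.mulVec u i)) ^ 2)
      (stdSimplex ℝ (Fin m)) p) :
    e2 (fun a => softmax τ y a - p a) ≤ Real.sqrt (2 / τ) * Real.sqrt (V1 τ μ B x y) := by
  have := nonempty_of_mem_stdSimplex hp
  set σ := softmax τ y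
  have hinf : IsLeast (_ '' stdSimplex ℝ (Fin m)) _ :=
    ⟨Set.mem_image_of_mem _ hp, Set.forall_mem_image.2 (isMinOn_iff.1 hmin)⟩
  have hV : V1 τ μ B x y = entropicObjective τ y σ - entropicObjective τ y p
      + (1 / (2 * μ)) * (e2 (fun i => x i - B.mulVec p i)) ^ 2 := by
    show sSup (entropicObjective τ y '' stdSimplex ℝ (Fin m)) + _ = _
    rw [(isGreatest_entropicObjective_softmax y hτ).csSup_eq, hinf.csInf_eq,
      entropicObjective, entropicObjective]
    ring
  have hsq : ∑ a, (σ a - p a) ^ 2 ≤ 2 / τ * V1 τ μ B x y := by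
    have hgap := sq_dist_softmax_le y hτ hp
    have hpen : 0 ≤ (1 / (2 * μ)) * (e2 (fun i => x i - B.mulVec p i)) ^ 2 := by positivity
    rw [hV, div_mul_eq_mul_div, le_div_iff₀ hτ]
    linarith
  calc e2 (fun a => σ a - p a) = √(∑ a, (σ a - p a) ^ 2) := rfl
    _ ≤ √(2 / τ * V1 τ μ B x y) := Real.sqrt_le_sqrt hsq
    _ = √(2 / τ) * √(V1 τ μ B x y) := Real.sqrt_mul (by positivity) _
end

section
/- With V₁ as above and μ ≤ ‖B‖₂²/τ, it holds for all x ∈ ℝ^n, y ∈ ℝ^m that ‖B·σ_τ(y) - x‖₂ ≤ (2√2·‖B‖₂/√τ)·V₁(x,y)^{1/2}. -/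
/-- The spectral (`ℓ₂ → ℓ₂` operator) norm of a matrix. -/
noncomputable def specNorm {n m : ℕ} (B : Matrix (Fin n) (Fin m) ℝ) : ℝ :=
  sSup ((fun v : Fin m → ℝ => e2 (B.mulVec v)) '' {v | e2 v ≤ 1})

section Helpers

lemma e2_nonneg {n : ℕ} (v : Fin n → ℝ) : 0 ≤ e2 v := Real.sqrt_nonneg _

lemma e2_sq {n : ℕ} (v : Fin n → ℝ) : e2 v ^ 2 = ∑ i, (v i) ^ 2 :=
  Real.sq_sqrt (Finset.sum_nonneg fun _ _ => sq_nonneg _)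

lemma e2_triangle {n : ℕ} (v w : Fin n → ℝ) :
    e2 (fun i => v i + w i) ≤ e2 v + e2 w := by
  have hvw : ∑ i, v i * w i ≤ e2 v * e2 w := by
    have h := Finset.sum_mul_sq_le_sq_mul_sq Finset.univ v w
    have h2 : (e2 v * e2 w) ^ 2 = (∑ i, v i ^ 2) * ∑ i, w i ^ 2 := by
      rw [mul_pow, e2_sq, e2_sq]
    nlinarith [mul_nonneg (e2_nonneg v) (e2_nonneg w), sq_nonneg (∑ i, v i * w i - e2 v * e2 w)]
  have key : ∑ i, (v i + w i) ^ 2 ≤ (e2 v + e2 w) ^ 2 := by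
    have h3 : ∑ i, (v i + w i) ^ 2 = (∑ i, v i ^ 2) + 2 * (∑ i, v i * w i) + ∑ i, w i ^ 2 := by
      rw [Finset.mul_sum, ← Finset.sum_add_distrib, ← Finset.sum_add_distrib]
      exact Finset.sum_congr rfl fun i _ => by ring
    rw [h3]
    have h1 := e2_sq v; have h2 := e2_sq w
    nlinarith
  calc e2 (fun i => v i + w i) = Real.sqrt (∑ i, (v i + w i) ^ 2) := rfl
    _ ≤ Real.sqrt ((e2 v + e2 w) ^ 2) := Real.sqrt_le_sqrt key
    _ = e2 v + e2 w := Real.sqrt_sq (add_nonneg (e2_nonneg v) (e2_nonneg w))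

lemma e2_smul {n : ℕ} (c : ℝ) (v : Fin n → ℝ) : e2 (fun i => c * v i) = |c| * e2 v := by
  unfold e2
  rw [← Real.sqrt_sq_eq_abs, ← Real.sqrt_mul (sq_nonneg c)]
  congr 1
  rw [Finset.mul_sum]
  exact Finset.sum_congr rfl fun i _ => by ring

lemma e2_eq_zero {n : ℕ} {v : Fin n → ℝ} (h : e2 v = 0) : v = 0 := by
  have h2 : ∑ i, (v i) ^ 2 = 0 := by
    have := e2_sq v; rw [h] at this; simpa using this.symm
  funext i
  have := (Finset.sum_eq_zero_iff_of_nonneg (fun j _ => sq_nonneg (v j))).mp h2 i (Finset.mem_univ i)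
  exact (pow_eq_zero_iff two_ne_zero).mp this

lemma e2_zero {n : ℕ} : e2 (0 : Fin n → ℝ) = 0 := by
  unfold e2; simp

lemma e2_sub_comm {n : ℕ} (v w : Fin n → ℝ) :
    e2 (fun i => v i - w i) = e2 (fun i => w i - v i) := by
  unfold e2
  congr 1
  exact Finset.sum_congr rfl fun i _ => by ring

lemma specNorm_bdd {n m : ℕ} (B : Matrix (Fin n) (Fin m) ℝ) :
    BddAbove ((fun v : Fin m → ℝ => e2 (B.mulVec v)) '' {v | e2 v ≤ 1}) := by
  refine ⟨Real.sqrt (∑ i, ∑ j, (B i j) ^ 2), ?_⟩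
  rintro _ ⟨v, hv, rfl⟩
  have hv' : e2 v ≤ 1 := hv
  have hv1 : ∑ j, (v j) ^ 2 ≤ 1 := by
    have h := e2_sq v
    nlinarith [e2_nonneg v]
  have key : ∑ i, (B.mulVec v i) ^ 2 ≤ ∑ i, ∑ j, (B i j) ^ 2 := by
    apply Finset.sum_le_sum
    intro i _
    have hcs := Finset.sum_mul_sq_le_sq_mul_sq Finset.univ (fun j => B i j) v
    have hmv : B.mulVec v i = ∑ j, B i j * v j := rfl
    rw [hmv]
    calc (∑ j, B i j * v j) ^ 2 ≤ (∑ j, (B i j) ^ 2) * ∑ j, (v j) ^ 2 := hcs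
      _ ≤ (∑ j, (B i j) ^ 2) * 1 :=
          mul_le_mul_of_nonneg_left hv1 (Finset.sum_nonneg fun _ _ => sq_nonneg _)
      _ = ∑ j, (B i j) ^ 2 := mul_one _
  exact Real.sqrt_le_sqrt key

lemma specNorm_nonneg {n m : ℕ} (B : Matrix (Fin n) (Fin m) ℝ) : 0 ≤ specNorm B :=
  Real.sSup_nonneg (by rintro _ ⟨v, _, rfl⟩; exact e2_nonneg _)

lemma e2_mulVec_le {n m : ℕ} (B : Matrix (Fin n) (Fin m) ℝ) (v : Fin m → ℝ) :
    e2 (B.mulVec v) ≤ specNorm B * e2 v := by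
  rcases eq_or_lt_of_le (e2_nonneg v) with h0 | h0
  · have hv0 : v = 0 := e2_eq_zero h0.symm
    subst hv0
    rw [Matrix.mulVec_zero, e2_zero, e2_zero, mul_zero]
  · set c := (e2 v)⁻¹ with hc
    have hcpos : 0 < c := inv_pos.mpr h0
    have hmem : (fun j => c * v j) ∈ {w : Fin m → ℝ | e2 w ≤ 1} := by
      simp only [Set.mem_setOf_eq, e2_smul, abs_of_pos hcpos]
      rw [hc, inv_mul_cancel₀ h0.ne']
    have hle : e2 (B.mulVec fun j => c * v j) ≤ specNorm B :=
      le_csSup (specNorm_bdd B) ⟨_, hmem, rfl⟩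
    have hmv : B.mulVec (fun j => c * v j) = fun i => c * B.mulVec v i := by
      funext i
      simp only [Matrix.mulVec, dotProduct]
      rw [Finset.mul_sum]
      exact Finset.sum_congr rfl fun j _ => by ring
    rw [hmv, e2_smul, abs_of_pos hcpos] at hle
    calc e2 (B.mulVec v) = e2 v * (c * e2 (B.mulVec v)) := by
          rw [hc]; field_simp
      _ ≤ e2 v * specNorm B := mul_le_mul_of_nonneg_left hle h0.le
      _ = specNorm B * e2 v := mul_comm _ _

lemma pointwise_kl {u s : ℝ} (hu : 0 ≤ u) (hs : 0 < s) :
    u - s + (Real.sqrt u - Real.sqrt s) ^ 2 ≤ u * (Real.log u - Real.log s) := by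
  rcases eq_or_lt_of_le hu with h0 | h0
  · rw [← h0]
    rw [Real.sqrt_zero]
    have : (0 - Real.sqrt s) ^ 2 = s := by
      rw [zero_sub, neg_sq, Real.sq_sqrt hs.le]
    rw [this]
    simp
  · have hsu : 0 < s / u := div_pos hs h0
    have hlog : Real.log (s / u) ≤ 2 * (Real.sqrt (s / u) - 1) := by
      have h1 := Real.log_le_sub_one_of_pos (Real.sqrt_pos.mpr hsu)
      have h2 : Real.log (Real.sqrt (s / u)) = Real.log (s / u) / 2 :=
        Real.log_sqrt hsu.le
      linarith
    have hld : Real.log (s / u) = Real.log s - Real.log u := Real.log_div hs.ne' h0.ne'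
    have hsqd : Real.sqrt (s / u) * Real.sqrt u = Real.sqrt s := by
      rw [← Real.sqrt_mul hsu.le, div_mul_cancel₀ _ h0.ne']
    have husq : Real.sqrt u * Real.sqrt u = u := Real.mul_self_sqrt hu
    have hssq : Real.sqrt s * Real.sqrt s = s := Real.mul_self_sqrt hs.le
    have key : u * (Real.log u - Real.log s) ≥ 2 * u - 2 * (Real.sqrt u * Real.sqrt s) := by
      have h3 : u * (Real.log u - Real.log s) = -(u * Real.log (s / u)) := by
        rw [hld]; ring
      have h4 : u * Real.log (s / u) ≤ u * (2 * (Real.sqrt (s / u) - 1)) :=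
        mul_le_mul_of_nonneg_left hlog hu
      have h5 : u * (2 * (Real.sqrt (s / u) - 1)) = 2 * (Real.sqrt u * Real.sqrt s) - 2 * u := by
        have h6 : u * Real.sqrt (s / u) = Real.sqrt u * Real.sqrt s := by
          calc u * Real.sqrt (s / u) = (Real.sqrt u * Real.sqrt u) * Real.sqrt (s / u) := by
                rw [husq]
            _ = Real.sqrt u * (Real.sqrt (s / u) * Real.sqrt u) := by ring
            _ = Real.sqrt u * Real.sqrt s := by rw [hsqd]
        nlinarith [h6]
      linarith
    nlinarith [key]

lemma sq_le_four_sqrt_sq {u s : ℝ} (hu0 : 0 ≤ u) (hu1 : u ≤ 1) (hs0 : 0 ≤ s) (hs1 : s ≤ 1) :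
    (u - s) ^ 2 ≤ 4 * (Real.sqrt u - Real.sqrt s) ^ 2 := by
  have husq : Real.sqrt u * Real.sqrt u = u := Real.mul_self_sqrt hu0
  have hssq : Real.sqrt s * Real.sqrt s = s := Real.mul_self_sqrt hs0
  have hu' : Real.sqrt u ≤ 1 := by
    rw [show (1:ℝ) = Real.sqrt 1 by rw [Real.sqrt_one]]
    exact Real.sqrt_le_sqrt hu1
  have hs' : Real.sqrt s ≤ 1 := by
    rw [show (1:ℝ) = Real.sqrt 1 by rw [Real.sqrt_one]]
    exact Real.sqrt_le_sqrt hs1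
  have h1 : u - s = (Real.sqrt u - Real.sqrt s) * (Real.sqrt u + Real.sqrt s) := by
    nlinarith
  rw [h1]
  have h2 : 0 ≤ Real.sqrt u + Real.sqrt s := by positivity
  have h3 : Real.sqrt u + Real.sqrt s ≤ 2 := by linarith
  nlinarith [sq_nonneg (Real.sqrt u - Real.sqrt s)]

end Helpers

/-- With `μ ≤ ‖B‖₂²/τ`, it holds that
`‖B·σ_τ(y) - x‖₂ ≤ (2√2·‖B‖₂/√τ)·V₁(x,y)^{1/2}`. -/
theorem Bsoftmax_sub_x_le_sqrt_V1 {n m : ℕ} (τ μ : ℝ) (hτ : 0 < τ) (hμ : 0 < μ)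
    (B : Matrix (Fin n) (Fin m) ℝ) (hμB : μ ≤ (specNorm B) ^ 2 / τ)
    (x : Fin n → ℝ) (y : Fin m → ℝ) :
    e2 (fun i => B.mulVec (softmax τ y) i - x i)
      ≤ (2 * Real.sqrt 2 * specNorm B / Real.sqrt τ) * Real.sqrt (V1 τ μ B x y) := by
  set N := specNorm B with hNdef
  have hN0 : 0 ≤ N := specNorm_nonneg B
  have hμτ : μ * τ ≤ N ^ 2 := (le_div_iff₀ hτ).mp hμB
  have hN2 : 0 < N ^ 2 := lt_of_lt_of_le (by positivity) hμτ
  have hN : 0 < N := hN0.lt_of_ne (fun h => by rw [← h] at hN2; simp at hN2)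
  -- rule out `m = 0`
  rcases Nat.eq_zero_or_pos m with hm | hm
  · exfalso
    subst hm
    have hall : ∀ v : Fin 0 → ℝ, (fun v => e2 (B.mulVec v)) v = 0 := by
      intro v
      have hmv : B.mulVec v = 0 := by
        funext i
        simp [Matrix.mulVec, dotProduct]
      show e2 (B.mulVec v) = 0
      rw [hmv, e2_zero]
    have himg : ((fun v : Fin 0 → ℝ => e2 (B.mulVec v)) '' {v | e2 v ≤ 1}) = {0} := by
      apply Set.eq_singleton_iff_unique_mem.mpr
      constructor
      · refine ⟨0, ?_, hall 0⟩
        show e2 (0 : Fin 0 → ℝ) ≤ 1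
        unfold e2
        simp
      · rintro _ ⟨v, _, rfl⟩
        exact hall v
    have : N = 0 := by
      rw [hNdef]
      unfold specNorm
      rw [himg, csSup_singleton]
    rw [this] at hN
    exact lt_irrefl _ hN
  haveI : Nonempty (Fin m) := Fin.pos_iff_nonempty.mp hm
  set σ := softmax τ y with hσdef
  set Z := ∑ b, Real.exp (y b / τ) with hZdef
  have hZ : 0 < Z := Finset.sum_pos (fun b _ => Real.exp_pos _) Finset.univ_nonempty
  have hσa : ∀ a, σ a = Real.exp (y a / τ) / Z := fun a => rfl
  have hσpos : ∀ a, 0 < σ a := fun a => by rw [hσa a]; exact div_pos (Real.exp_pos _) hZ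
  have hσsum : ∑ a, σ a = 1 := by
    rw [show (∑ a, σ a) = ∑ a, Real.exp (y a / τ) / Z from
      Finset.sum_congr rfl fun a _ => hσa a]
    rw [← Finset.sum_div, ← hZdef, div_self hZ.ne']
  have hσS : σ ∈ stdSimplex ℝ (Fin m) := ⟨fun a => (hσpos a).le, hσsum⟩
  have hσ1 : ∀ a, σ a ≤ 1 := fun a =>
    hσsum ▸ Finset.single_le_sum (fun b _ => (hσpos b).le) (Finset.mem_univ a)
  have hlogσ : ∀ a, Real.log (σ a) = y a / τ - Real.log Z := by
    intro a
    rw [hσa a, Real.log_div (Real.exp_pos _).ne' hZ.ne', Real.log_exp]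
  set KL : (Fin m → ℝ) → ℝ :=
    fun u => ∑ a, u a * (Real.log (u a) - Real.log (σ a)) with hKLdef
  -- the value identity
  have hfid : ∀ u ∈ stdSimplex ℝ (Fin m),
      ∑ a, u a * y a + τ * entropy u = τ * Real.log Z - τ * KL u := by
    intro u hu
    have hsum1 : (∑ a, u a) = 1 := hu.2
    have e1 : τ * KL u
        = ∑ a, (τ * (u a * Real.log (u a)) - u a * y a + τ * Real.log Z * u a) := by
      rw [hKLdef, Finset.mul_sum]
      refine Finset.sum_congr rfl fun a _ => ?_
      rw [hlogσ a]
      field_simp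
      ring
    have e2' : ∑ a, (τ * (u a * Real.log (u a)) - u a * y a + τ * Real.log Z * u a)
        = τ * (∑ a, u a * Real.log (u a)) - (∑ a, u a * y a) + τ * Real.log Z := by
      rw [Finset.sum_add_distrib, Finset.sum_sub_distrib, ← Finset.mul_sum, ← Finset.mul_sum,
        hsum1, mul_one]
    unfold entropy
    have := e1.trans e2'
    linarith
  have hKLσ : KL σ = 0 := by
    rw [hKLdef]
    exact Finset.sum_eq_zero fun a _ => by rw [sub_self, mul_zero]
  have hfσ : ∑ a, σ a * y a + τ * entropy σ = τ * Real.log Z := by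
    rw [hfid σ hσS, hKLσ, mul_zero, sub_zero]
  -- Pinsker-type lower bound on KL
  have hKLlb : ∀ u ∈ stdSimplex ℝ (Fin m),
      (1 / 4) * (e2 (fun a => u a - σ a)) ^ 2 ≤ KL u := by
    intro u hu
    have hu1 : ∀ a, u a ≤ 1 := fun a =>
      hu.2 ▸ Finset.single_le_sum (fun b _ => hu.1 b) (Finset.mem_univ a)
    have hA : ∑ a, (u a - σ a + (Real.sqrt (u a) - Real.sqrt (σ a)) ^ 2) ≤ KL u :=
      Finset.sum_le_sum fun a _ => pointwise_kl (hu.1 a) (hσpos a)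
    have hB : ∑ a, (u a - σ a + (Real.sqrt (u a) - Real.sqrt (σ a)) ^ 2)
        = ∑ a, (Real.sqrt (u a) - Real.sqrt (σ a)) ^ 2 := by
      rw [Finset.sum_add_distrib, Finset.sum_sub_distrib, hu.2, hσsum, sub_self, zero_add]
    have hC : ∑ a, (u a - σ a) ^ 2 ≤ 4 * ∑ a, (Real.sqrt (u a) - Real.sqrt (σ a)) ^ 2 := by
      rw [Finset.mul_sum]
      exact Finset.sum_le_sum fun a _ =>
        sq_le_four_sqrt_sq (hu.1 a) (hu1 a) (hσpos a).le (hσ1 a)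
    have hD : e2 (fun a => u a - σ a) ^ 2 = ∑ a, (u a - σ a) ^ 2 := e2_sq _
    linarith
  have hKL0 : ∀ u ∈ stdSimplex ℝ (Fin m), 0 ≤ KL u := fun u hu =>
    le_trans (by positivity) (hKLlb u hu)
  -- sup part
  have hsup : τ * Real.log Z ≤
      sSup ((fun u' : Fin m → ℝ => ∑ a, u' a * y a + τ * entropy u') '' stdSimplex ℝ (Fin m)) := by
    rw [← hfσ]
    apply le_csSup
    · refine ⟨τ * Real.log Z, ?_⟩
      rintro _ ⟨u, hu, rfl⟩
      show ∑ a, u a * y a + τ * entropy u ≤ τ * Real.log Z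
      rw [hfid u hu]
      have := mul_nonneg hτ.le (hKL0 u hu)
      linarith
    · exact ⟨σ, hσS, rfl⟩
  -- inf part
  set D := e2 (fun i => B.mulVec σ i - x i) with hDdef
  have hD0 : 0 ≤ D := e2_nonneg _
  have hinf : -(τ * Real.log Z) + τ / (8 * N ^ 2) * D ^ 2 ≤
      sInf ((fun u : Fin m → ℝ =>
        -(∑ a, u a * y a) - τ * entropy u
          + (1 / (2 * μ)) * (e2 (fun i => x i - B.mulVec u i)) ^ 2) '' stdSimplex ℝ (Fin m)) := by
    apply le_csInf ⟨_, Set.mem_image_of_mem _ hσS⟩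
    rintro _ ⟨u, hu, rfl⟩
    simp only
    set a := e2 (fun j => σ j - u j) with hadef
    set b := e2 (fun i => x i - B.mulVec u i) with hbdef
    have ha0 : 0 ≤ a := e2_nonneg _
    have hb0 : 0 ≤ b := e2_nonneg _
    -- triangle : D ≤ N * a + b
    have hDab : D ≤ N * a + b := by
      have hmv : ∀ i, B.mulVec σ i - x i
          = B.mulVec (fun j => σ j - u j) i + (B.mulVec u i - x i) := by
        intro i
        have h7 : B.mulVec (fun j => σ j - u j) i = B.mulVec σ i - B.mulVec u i := by
          simp only [Matrix.mulVec, dotProduct]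
          rw [← Finset.sum_sub_distrib]
          exact Finset.sum_congr rfl fun j _ => by ring
        rw [h7]; ring
      calc D = e2 (fun i => B.mulVec (fun j => σ j - u j) i + (B.mulVec u i - x i)) := by
            rw [hDdef]; congr 1; funext i; exact hmv i
        _ ≤ e2 (B.mulVec (fun j => σ j - u j)) + e2 (fun i => B.mulVec u i - x i) :=
            e2_triangle _ _
        _ ≤ N * a + b := by
            have t1 : e2 (B.mulVec (fun j => σ j - u j)) ≤ N * a := by
              rw [hNdef, hadef]; exact e2_mulVec_le B _
            have t2 : e2 (fun i => B.mulVec u i - x i) = b := by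
              rw [hbdef]; exact e2_sub_comm _ _
            rw [t2]; exact add_le_add t1 le_rfl
    have hD2 : D ^ 2 ≤ 2 * N ^ 2 * a ^ 2 + 2 * b ^ 2 := by
      nlinarith [hDab, hD0, sq_nonneg (N * a - b), mul_nonneg hN.le ha0, hb0]
    -- KL lower bound, with sides swapped
    have hKLa : (1 / 4) * a ^ 2 ≤ KL u := by
      have := hKLlb u hu
      rw [hadef, e2_sub_comm]
      exact this
    -- the coefficient comparison
    have hcoef : τ / (4 * N ^ 2) * b ^ 2 ≤ 1 / (2 * μ) * b ^ 2 := by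
      apply mul_le_mul_of_nonneg_right _ (sq_nonneg b)
      rw [div_le_div_iff₀ (by positivity) (by positivity)]
      nlinarith
    have hfu : ∑ a, u a * y a + τ * entropy u = τ * Real.log Z - τ * KL u := hfid u hu
    have hmain : τ / (8 * N ^ 2) * D ^ 2 ≤ τ * KL u + 1 / (2 * μ) * b ^ 2 := by
      have s1 : τ / (8 * N ^ 2) * D ^ 2 ≤ τ / (8 * N ^ 2) * (2 * N ^ 2 * a ^ 2 + 2 * b ^ 2) :=
        mul_le_mul_of_nonneg_left hD2 (by positivity)
      have s2 : τ / (8 * N ^ 2) * (2 * N ^ 2 * a ^ 2 + 2 * b ^ 2)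
          = τ * (1 / 4 * a ^ 2) + τ / (4 * N ^ 2) * b ^ 2 := by
        field_simp
        ring
      have s3 : τ * (1 / 4 * a ^ 2) ≤ τ * KL u := mul_le_mul_of_nonneg_left hKLa hτ.le
      linarith
    linarith
  -- combine
  have hVge : τ / (8 * N ^ 2) * D ^ 2 ≤ V1 τ μ B x y := by
    unfold V1
    have := add_le_add hsup hinf
    linarith
  have hV0 : 0 ≤ V1 τ μ B x y := le_trans (by positivity) hVge
  have hRHS0 : 0 ≤ 2 * Real.sqrt 2 * N / Real.sqrt τ * Real.sqrt (V1 τ μ B x y) := by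
    apply mul_nonneg _ (Real.sqrt_nonneg _)
    apply div_nonneg _ (Real.sqrt_nonneg _)
    have := Real.sqrt_nonneg 2
    nlinarith
  have hD2V : D ^ 2 ≤ (2 * Real.sqrt 2 * N / Real.sqrt τ * Real.sqrt (V1 τ μ B x y)) ^ 2 := by
    have hRHS : (2 * Real.sqrt 2 * N / Real.sqrt τ * Real.sqrt (V1 τ μ B x y)) ^ 2
        = 8 * N ^ 2 / τ * V1 τ μ B x y := by
      rw [mul_pow, div_pow, mul_pow, mul_pow, Real.sq_sqrt (by norm_num : (0:ℝ) ≤ 2),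
        Real.sq_sqrt hτ.le, Real.sq_sqrt hV0]
      ring
    rw [hRHS]
    have h8 : (0:ℝ) ≤ 8 * N ^ 2 / τ := by positivity
    have h := mul_le_mul_of_nonneg_left hVge h8
    have hsimp : 8 * N ^ 2 / τ * (τ / (8 * N ^ 2) * D ^ 2) = D ^ 2 := by
      field_simp
    linarith
  have := Real.sqrt_le_sqrt hD2V
  rwa [Real.sqrt_sq hD0, Real.sqrt_sq hRHS0] at this
end
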